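/- arXiv:math/0311293 — 5 statements merged into one kernel-verified Lean document; each statement's English description precedes it below -/
import Mathlib

section
/- Let a_1, …, a_n be positive integers with Σ_{i=1}^n 1/a_i > 1. Then Σ_{i=1}^n 1/a_i ≥ 1 + 1/(a_1·a_2···a_n). -/
/-! The sum `∑ 1/aᵢ` is a fraction with denominator `P = ∏ aᵢ`, namely `N / P` with
`N = ∑ᵢ ∏_{j ≠ i} aⱼ`. If `N / P > 1` then `N ≥ P + 1`, i.e. `N / P ≥ 1 + 1 / P`. -/

open Finset

theorem Finset.sum_one_div_mul_prod {ι K : Type*} [DecidableEq ι] [Field K] (s : Finset ι)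
    (f : ι → K) (hf : ∀ i ∈ s, f i ≠ 0) :
    (∑ i ∈ s, 1 / f i) * ∏ i ∈ s, f i = ∑ i ∈ s, ∏ j ∈ s.erase i, f j := by
  rw [sum_mul]
  refine sum_congr rfl fun i hi => ?_
  rw [← mul_prod_erase s f hi, one_div, inv_mul_cancel_left₀ (hf i hi)]

theorem one_add_one_div_le_of_mul_natCast_eq_natCast {K : Type*} [Field K] [LinearOrder K]
    [IsStrictOrderedRing K] {x : K} {P N : ℕ} (hP : 0 < P) (hx : x * P = N) (h : 1 < x) :
    1 + 1 / (P : K) ≤ x := by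
  have hP' : (0 : K) < P := by exact_mod_cast hP
  have hPN : P < N := by
    rw [← Nat.cast_lt (α := K), ← hx]
    exact lt_mul_of_one_lt_left hP' h
  calc 1 + 1 / (P : K) = ((P + 1 : ℕ) : K) / P := by
        rw [Nat.cast_add_one, add_div, div_self hP'.ne']
    _ ≤ N / P := by gcongr; exact hPN
    _ = x := by rw [← hx, mul_div_cancel_right₀ x hP'.ne']

/-- If `a 1, …, a n` are positive integers with `∑ 1/(a i) > 1`, then
`∑ 1/(a i) ≥ 1 + 1/(a 1 ⋯ a n)`. -/
theorem sum_reciprocals_gt_one_ge (n : ℕ) (a : Fin n → ℕ) (hpos : ∀ i, 0 < a i)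
    (h : 1 < ∑ i, (1 : ℚ) / (a i : ℚ)) :
    1 + 1 / (∏ i, (a i : ℚ)) ≤ ∑ i, (1 : ℚ) / (a i : ℚ) := by
  have hden := sum_one_div_mul_prod univ (fun i => (a i : ℚ))
    fun i _ => by exact_mod_cast (hpos i).ne'
  have key := one_add_one_div_le_of_mul_natCast_eq_natCast (P := ∏ i, a i)
    (N := ∑ i, ∏ j ∈ univ.erase i, a j) (prod_pos fun i _ => hpos i) (by push_cast; exact hden) h
  push_cast at key
  exact key
end

section
/- Let m ≥ 3 and let a_1 ≤ a_2 ≤ … ≤ a_m be positive integers such that Σ_{i=1}^{m-1} 1/a_i > 1, the product a_1·a_2···a_{m-1} is at most m!·(c_m - 1), and Σ_{i=1}^m 1/a_i < 1 + ((m-1)/(m-2))·(1/a_m). Then a_m < (m!/(m-2))·(c_m - 1), where (c_k) is the extremal sequence. -/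
/-- The extremal (Sylvester/Euclid) sequence: `c 1 = 2` and `c (k+1) = c k ^ 2 - c k + 1`
(the value at index `0` is a junk value). -/
def extremal : ℕ → ℕ
  | 0 => 1
  | 1 => 2
  | (n + 2) => extremal (n + 1) ^ 2 - extremal (n + 1) + 1

lemma extremal_ge_one (n : ℕ) : 1 ≤ extremal n := by
  match n with
  | 0 => simp [extremal]
  | 1 => simp [extremal]
  | (n+2) => simp [extremal]

/-- Let `m ≥ 3` and let `a 1 ≤ … ≤ a m` be positive integers such that
`∑_{i=1}^{m-1} 1/(a i) > 1`, the product `a 1 ⋯ a (m-1)` is at most `m! * (c m - 1)`,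
and `∑_{i=1}^m 1/(a i) < 1 + ((m-1)/(m-2)) * (1/(a m))`.
Then `a m < (m!/(m-2)) * (c m - 1)`, where `c` is the extremal sequence. -/
theorem last_entry_bound (m : ℕ) (hm : 3 ≤ m) (a : ℕ → ℕ)
    (hpos : ∀ i ∈ Finset.Icc 1 m, 0 < a i)
    (hmono : ∀ i ∈ Finset.Icc 1 m, ∀ j ∈ Finset.Icc 1 m, i ≤ j → a i ≤ a j)
    (hgt : 1 < ∑ i ∈ Finset.Icc 1 (m - 1), (1 : ℚ) / (a i : ℚ))
    (hprod : (∏ i ∈ Finset.Icc 1 (m - 1), a i) ≤ m.factorial * (extremal m - 1))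
    (hlt : (∑ i ∈ Finset.Icc 1 m, (1 : ℚ) / (a i : ℚ)) <
      1 + ((m : ℚ) - 1) / ((m : ℚ) - 2) * (1 / (a m : ℚ))) :
    (a m : ℚ) < (m.factorial : ℚ) / ((m : ℚ) - 2) * ((extremal m : ℚ) - 1) := by
  set s := Finset.Icc 1 (m - 1) with hs
  have hmem : ∀ i ∈ s, i ∈ Finset.Icc 1 m := by
    intro i hi
    simp only [hs, Finset.mem_Icc] at hi ⊢
    omega
  have hposs : ∀ i ∈ s, 0 < a i := fun i hi => hpos i (hmem i hi)
  set P : ℕ := ∏ i ∈ s, a i with hP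
  have hPpos : 0 < P := Finset.prod_pos hposs
  have hPne : (P : ℚ) ≠ 0 := by exact_mod_cast hPpos.ne'
  set N : ℕ := ∑ i ∈ s, ∏ j ∈ s.erase i, a j with hN
  have hsum : (∑ i ∈ s, (1:ℚ)/(a i)) = (N : ℚ) / P := by
    rw [hN, Nat.cast_sum, Finset.sum_div]
    refine Finset.sum_congr rfl fun i hi => ?_
    have h1 : (∏ j ∈ s.erase i, a j) * a i = P := Finset.prod_erase_mul s a hi
    have hai : (a i : ℚ) ≠ 0 := by exact_mod_cast (hposs i hi).ne'
    rw [div_eq_div_iff hai hPne, one_mul]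
    exact_mod_cast h1.symm
  -- from hgt: P < N
  have hPQ : (0:ℚ) < P := by exact_mod_cast hPpos
  have hPN : P + 1 ≤ N := by
    rw [hsum, lt_div_iff₀ hPQ, one_mul] at hgt
    have : P < N := by exact_mod_cast hgt
    omega
  have hSlb : 1 + 1 / (P : ℚ) ≤ ∑ i ∈ s, (1:ℚ)/(a i) := by
    rw [hsum, le_div_iff₀ hPQ]
    have h : ((P : ℚ) + 1) ≤ N := by exact_mod_cast hPN
    field_simp
    linarith
  -- split the big sum
  have hsplit : (∑ i ∈ Finset.Icc 1 m, (1 : ℚ) / (a i : ℚ))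
      = (∑ i ∈ s, (1:ℚ)/(a i)) + 1 / (a m : ℚ) := by
    have h1 : m - 1 + 1 = m := by omega
    rw [hs, ← h1, Finset.sum_Icc_succ_top (by omega)]
    simp
  have ham : 0 < a m := hpos m (by simp [Finset.mem_Icc]; omega)
  have hamQ : (0:ℚ) < (a m : ℚ) := by exact_mod_cast ham
  have hk : (0:ℚ) < (m : ℚ) - 2 := by
    have : (3:ℚ) ≤ m := by exact_mod_cast hm
    linarith
  -- derive (m-2) * a m < P
  have key : ((m : ℚ) - 2) * (a m : ℚ) < P := by
    rw [hsplit] at hlt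
    have h2 : 1 / (P : ℚ) < ((m : ℚ) - 1) / ((m : ℚ) - 2) * (1 / (a m : ℚ)) - 1 / (a m : ℚ) := by
      linarith
    have h3 : ((m : ℚ) - 1) / ((m : ℚ) - 2) * (1 / (a m : ℚ)) - 1 / (a m : ℚ)
        = 1 / (((m : ℚ) - 2) * (a m : ℚ)) := by
      field_simp
      ring
    rw [h3] at h2
    have hPQ : (0:ℚ) < P := by exact_mod_cast hPpos
    rw [div_lt_div_iff₀ hPQ (by positivity)] at h2
    linarith
  -- conclude
  have hcast : ((m.factorial * (extremal m - 1) : ℕ) : ℚ)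
      = (m.factorial : ℚ) * ((extremal m : ℚ) - 1) := by
    push_cast [Nat.cast_sub (extremal_ge_one m)]
    ring
  have hprodQ : (P : ℚ) ≤ (m.factorial : ℚ) * ((extremal m : ℚ) - 1) := by
    rw [← hcast]
    exact_mod_cast hprod
  rw [div_mul_eq_mul_div, lt_div_iff₀ hk]
  nlinarith
end

section
/- Let m ≥ 3 and let k be a positive integer with gcd(m-1, k) = 1 and k > (m-1)(m-2). Then the m-tuple a = (m-1, m-1, …, m-1, k) (with m-1 copies of m-1 followed by k) satisfies KE conditions (1), (2) and (3). In particular, for each m ≥ 3 there are infinitely many m-tuples of positive integers satisfying KE conditions (1)-(3). -/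
/-- The minimum of a rational-valued function on a finite type (junk value `0` if empty). -/
def finMin {α : Type*} [Fintype α] (f : α → ℚ) : ℚ :=
  if h : (Finset.univ : Finset α).Nonempty then Finset.univ.inf' h f else 0

/-- The sum of reciprocals `∑ i, 1/(a i)` of an `m`-tuple, as a rational number. -/
def recipSum {m : ℕ} (a : Fin m → ℕ) : ℚ :=
  ∑ i, (1 : ℚ) / (a i : ℚ)

/-- KE condition (1): `1 < ∑ i, 1/(a i)`. -/
def KE1 {m : ℕ} (a : Fin m → ℕ) : Prop :=
  1 < recipSum a

/-- KE condition (2): `∑ i, 1/(a i) < 1 + ((m-1)/(m-2)) * min_i (1/(a i))`. -/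
def KE2 {m : ℕ} (a : Fin m → ℕ) : Prop :=
  recipSum a < 1 + ((m : ℚ) - 1) / ((m : ℚ) - 2) * finMin (fun i : Fin m => (1 : ℚ) / (a i : ℚ))

/-- `b j = gcd(a j, lcm(a i : i ≠ j))`. -/
def bFactor {m : ℕ} (a : Fin m → ℕ) (j : Fin m) : ℕ :=
  Nat.gcd (a j) ((Finset.univ.erase j).lcm a)

/-- KE condition (3): `∑ i, 1/(a i) < 1 + ((m-1)/(m-2)) * min_{i,j} (1/(b i * b j))`. -/
def KE3 {m : ℕ} (a : Fin m → ℕ) : Prop :=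
  recipSum a < 1 + ((m : ℚ) - 1) / ((m : ℚ) - 2) *
    finMin (fun p : Fin m × Fin m => (1 : ℚ) / ((bFactor a p.1 * bFactor a p.2 : ℕ) : ℚ))

/-- Adjacency in the graph `G(a)`: distinct vertices `i`, `j` are joined by an edge
iff `gcd(a i, a j) > 1`. -/
def GraphAdj {m : ℕ} (a : Fin m → ℕ) (i j : Fin m) : Prop :=
  i ≠ j ∧ 1 < Nat.gcd (a i) (a j)

/-- A vertex of `G(a)` is isolated if it lies on no edge. -/
def IsIsolated {m : ℕ} (a : Fin m → ℕ) (i : Fin m) : Prop :=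
  ∀ j, ¬ GraphAdj a i j

/-- `C_ev`: the connected component of `G(a)` determined by the even entries, i.e. the set of
vertices reachable in `G(a)` from some vertex `i` with `a i` even. -/
def Cev {m : ℕ} (a : Fin m → ℕ) : Set (Fin m) :=
  {j | ∃ i, Even (a i) ∧ Relation.ReflTransGen (GraphAdj a) i j}

/-- The sphere condition (Brieskorn): either `G(a)` has at least two isolated vertices, or
`G(a)` has exactly one isolated vertex `i` with `a i` odd, `C_ev` has an odd number of
vertices, and `gcd(a i, a j) = 2` for any two distinct vertices `i`, `j` of `C_ev`. -/
def SphereCond {m : ℕ} (a : Fin m → ℕ) : Prop :=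
  (∃ i j : Fin m, i ≠ j ∧ IsIsolated a i ∧ IsIsolated a j) ∨
  ((∃ i : Fin m, IsIsolated a i ∧ Odd (a i) ∧ ∀ j : Fin m, IsIsolated a j → j = i) ∧
    Odd (Cev a).ncard ∧
    ∀ i ∈ Cev a, ∀ j ∈ Cev a, i ≠ j → Nat.gcd (a i) (a j) = 2)

lemma KE_main (n k : ℕ) (hk : 0 < k) (hlt : (n+2)*(n+1) < k) :
    KE1 (fun i : Fin (n+3) => if (i : ℕ) < n+2 then n+2 else k) ∧
    KE2 (fun i : Fin (n+3) => if (i : ℕ) < n+2 then n+2 else k) ∧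
    KE3 (fun i : Fin (n+3) => if (i : ℕ) < n+2 then n+2 else k) := by
  set a : Fin (n+3) → ℕ := fun i => if (i : ℕ) < n+2 then n+2 else k with ha
  have hK : (0:ℚ) < (k:ℚ) := by exact_mod_cast hk
  have hKb : ((n:ℚ)+2)*((n:ℚ)+1) < (k:ℚ) := by exact_mod_cast hlt
  have hn2k : n + 2 ≤ k := by nlinarith
  have apos : ∀ i, 0 < a i := by
    intro i; simp only [ha]; split
    · omega
    · exact hk
  have hale : ∀ i, a i ≤ k := by
    intro i; simp only [ha]; split
    · exact hn2k
    · exact le_refl k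
  have hsum : recipSum a = 1 + 1/(k:ℚ) := by
    unfold recipSum
    rw [Fin.sum_univ_castSucc]
    have h1 : ∀ i : Fin (n+2), a i.castSucc = n+2 := by
      intro i; simp only [ha]; rw [if_pos]; exact i.isLt
    have h2 : a (Fin.last (n+2)) = k := by
      simp only [ha]; rw [if_neg]; simp [Fin.last]
    rw [h2]
    have : ∀ i : Fin (n+2), (1:ℚ)/(a i.castSucc : ℚ) = 1/((n:ℚ)+2) := by
      intro i; rw [h1]; push_cast; ring_nf
    rw [Finset.sum_congr rfl (fun i _ => this i), Finset.sum_const]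
    simp only [Finset.card_univ, Fintype.card_fin, nsmul_eq_mul]
    have hn2 : ((n:ℚ)+2) ≠ 0 := by positivity
    push_cast
    field_simp
  have hc1 : (1:ℚ) < ((n:ℚ)+2)/((n:ℚ)+1) := by
    rw [lt_div_iff₀ (by positivity)]; linarith
  have hc0 : (0:ℚ) < ((n:ℚ)+2)/((n:ℚ)+1) := lt_trans one_pos hc1
  have hcast : (((n+3 : ℕ)):ℚ) - 1 = (n:ℚ) + 2 := by push_cast; ring
  have hcast2 : (((n+3 : ℕ)):ℚ) - 2 = (n:ℚ) + 1 := by push_cast; ring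
  refine ⟨?_, ?_, ?_⟩
  · unfold KE1
    rw [hsum]
    have : (0:ℚ) < 1/(k:ℚ) := by positivity
    linarith
  · unfold KE2
    rw [hsum, hcast, hcast2]
    have hmin : (1:ℚ)/(k:ℚ) ≤ finMin (fun i : Fin (n+3) => (1:ℚ)/(a i : ℚ)) := by
      unfold finMin
      rw [dif_pos Finset.univ_nonempty]
      apply Finset.le_inf'
      intro i _
      exact one_div_le_one_div_of_le (by exact_mod_cast apos i) (by exact_mod_cast hale i)
    have h1 : (1:ℚ)/(k:ℚ) < ((n:ℚ)+2)/((n:ℚ)+1) * (1/(k:ℚ)) := by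
      nlinarith [mul_lt_mul_of_pos_right hc1 (show (0:ℚ) < 1/(k:ℚ) by positivity)]
    have h2 : ((n:ℚ)+2)/((n:ℚ)+1) * (1/(k:ℚ)) ≤
        ((n:ℚ)+2)/((n:ℚ)+1) * finMin (fun i : Fin (n+3) => (1:ℚ)/(a i : ℚ)) := by
      gcongr
    linarith
  · unfold KE3
    rw [hsum, hcast, hcast2]
    have hble : ∀ j, bFactor a j ≤ n+2 := by
      intro j
      by_cases hj : (j:ℕ) < n+2
      · have haj : a j = n+2 := by simp only [ha]; rw [if_pos hj]
        calc bFactor a j ≤ a j := Nat.gcd_le_left _ (apos j)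
          _ = n+2 := haj
      · have hL : ((Finset.univ.erase j).lcm a) ∣ n+2 := by
          apply Finset.lcm_dvd
          intro i hi
          have hi' : i ≠ j := (Finset.mem_erase.mp hi).1
          have hiv : (i:ℕ) < n+2 := by
            have h1 := i.isLt
            have h2 := j.isLt
            have : (i:ℕ) ≠ (j:ℕ) := fun h => hi' (Fin.ext h)
            omega
          have : a i = n+2 := by simp only [ha]; rw [if_pos hiv]
          rw [this]
        exact Nat.le_of_dvd (by omega) ((Nat.gcd_dvd_right _ _).trans hL)
    have hbpos : ∀ j, 0 < bFactor a j := by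
      intro j
      exact Nat.gcd_pos_of_pos_left _ (apos j)
    have hmin : (1:ℚ)/(((n:ℚ)+2)^2) ≤
        finMin (fun p : Fin (n+3) × Fin (n+3) =>
          (1:ℚ) / ((bFactor a p.1 * bFactor a p.2 : ℕ) : ℚ)) := by
      unfold finMin
      rw [dif_pos Finset.univ_nonempty]
      apply Finset.le_inf'
      intro p _
      apply one_div_le_one_div_of_le
      · have := Nat.mul_pos (hbpos p.1) (hbpos p.2)
        exact_mod_cast this
      · have h1 : bFactor a p.1 * bFactor a p.2 ≤ (n+2)*(n+2) :=
          Nat.mul_le_mul (hble p.1) (hble p.2)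
        have : ((bFactor a p.1 * bFactor a p.2 : ℕ) : ℚ) ≤ (((n+2)*(n+2) : ℕ) : ℚ) := by
          exact_mod_cast h1
        calc ((bFactor a p.1 * bFactor a p.2 : ℕ) : ℚ) ≤ (((n+2)*(n+2) : ℕ) : ℚ) := this
          _ = ((n:ℚ)+2)^2 := by push_cast; ring
    have h1 : (1:ℚ)/(k:ℚ) < 1/(((n:ℚ)+1)*((n:ℚ)+2)) :=
      one_div_lt_one_div_of_lt (by positivity) (by linarith)
    have h2 : (1:ℚ)/(((n:ℚ)+1)*((n:ℚ)+2)) = ((n:ℚ)+2)/((n:ℚ)+1) * (1/(((n:ℚ)+2)^2)) := by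
      field_simp
    have h3 : ((n:ℚ)+2)/((n:ℚ)+1) * (1/(((n:ℚ)+2)^2)) ≤
        ((n:ℚ)+2)/((n:ℚ)+1) * finMin (fun p : Fin (n+3) × Fin (n+3) =>
          (1:ℚ) / ((bFactor a p.1 * bFactor a p.2 : ℕ) : ℚ)) := by
      gcongr
    linarith

/-- For `m ≥ 3` and `k` a positive integer with `gcd(m-1, k) = 1` and `k > (m-1)(m-2)`,
the `m`-tuple `(m-1, …, m-1, k)` (with `m-1` copies of `m-1` followed by `k`) satisfies
KE conditions (1), (2) and (3). In particular, for each `m ≥ 3` there are infinitely many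
`m`-tuples of positive integers satisfying KE conditions (1)–(3). -/
theorem infinitely_many_KE_tuples (m : ℕ) (hm : 3 ≤ m) :
    (∀ k : ℕ, 0 < k → Nat.gcd (m - 1) k = 1 → (m - 1) * (m - 2) < k →
      KE1 (fun i : Fin m => if (i : ℕ) < m - 1 then m - 1 else k) ∧
      KE2 (fun i : Fin m => if (i : ℕ) < m - 1 then m - 1 else k) ∧
      KE3 (fun i : Fin m => if (i : ℕ) < m - 1 then m - 1 else k)) ∧
    {a : Fin m → ℕ | (∀ i, 0 < a i) ∧ KE1 a ∧ KE2 a ∧ KE3 a}.Infinite := by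
  obtain ⟨n, rfl⟩ : ∃ n, m = n + 3 := ⟨m - 3, by omega⟩
  constructor
  · intro k hk _ hlt
    exact KE_main n k hk hlt
  · apply Set.infinite_of_injective_forall_mem
      (f := fun t : ℕ => fun i : Fin (n+3) =>
        if (i : ℕ) < n+2 then n+2 else 1+(n+2)*((n+1)+t))
    · intro t t' h
      have h1 := congrFun h ⟨n+2, by omega⟩
      simp only [Fin.val_mk, lt_irrefl, if_false] at h1
      have h2 := Nat.eq_of_mul_eq_mul_left (show 0 < n+2 by omega)
        (Nat.add_left_cancel h1)
      omega
    · intro t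
      have hkpos : 0 < 1+(n+2)*((n+1)+t) := by positivity
      have hklt : (n+2)*(n+1) < 1+(n+2)*((n+1)+t) := by nlinarith
      obtain ⟨h1, h2, h3⟩ := KE_main n (1+(n+2)*((n+1)+t)) hkpos hklt
      refine ⟨?_, h1, h2, h3⟩
      intro i
      dsimp only
      split
      · omega
      · exact hkpos
end

section
/- Let k ≥ 1 and let a_1, …, a_{2k+1} be integers with a_i ≥ 2, and let N be any common multiple of a_1, …, a_{2k+1}. Then the Brieskorn signature τ(a) equals (-1)^k / N · Σ_{j=0}^{N-1} cot(π(2j+1)/(2N)) · cot(π(2j+1)/(2a_1)) ··· cot(π(2j+1)/(2a_{2k+1})) (none of the arguments π(2j+1)/(2N) and π(2j+1)/(2a_i) is an integer multiple of π, so each cotangent is well defined). -/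
open Complex Finset

/-- The Brieskorn signature `τ(a) = N⁺(a) - N⁻(a)` of a tuple `a` of integers `≥ 2`:
`N⁺(a)` (resp. `N⁻(a)`) counts integer vectors `x` with `0 < x i < a i` for all `i` such
that `∑ i, (x i)/(a i)` is congruent modulo `2` to a real number in the open interval
`(0,1)` (resp. `(1,2)`). -/
noncomputable def brieskornTau {m : ℕ} (a : Fin m → ℕ) : ℤ :=
  ({x : Fin m → ℤ | (∀ i, 0 < x i ∧ x i < (a i : ℤ)) ∧
      ∃ n : ℤ, (∑ i, (x i : ℚ) / (a i : ℚ)) - 2 * n ∈ Set.Ioo (0 : ℚ) 1}.ncard : ℤ) -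
  ({x : Fin m → ℤ | (∀ i, 0 < x i ∧ x i < (a i : ℤ)) ∧
      ∃ n : ℤ, (∑ i, (x i : ℚ) / (a i : ℚ)) - 2 * n ∈ Set.Ioo (1 : ℚ) 2}.ncard : ℤ)

noncomputable def E (q : ℚ) : ℂ := Complex.exp (Real.pi * (q : ℝ) * Complex.I)

lemma E_add (p q : ℚ) : E (p + q) = E p * E q := by
  rw [E, E, E, ← Complex.exp_add]; push_cast; ring_nf

lemma E_int (n : ℤ) : E n = (-1 : ℂ) ^ n := by
  rw [E]
  push_cast
  rw [mul_comm (Real.pi:ℂ) (n:ℂ), mul_assoc, Complex.exp_int_mul, Complex.exp_pi_mul_I]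

lemma E_eq_one_iff (q : ℚ) : E q = 1 ↔ ∃ n : ℤ, q = 2 * n := by
  rw [E, Complex.exp_eq_one_iff]
  constructor
  · rintro ⟨n, h⟩
    refine ⟨n, ?_⟩
    have hπ : (Real.pi : ℂ) ≠ 0 := by exact_mod_cast Real.pi_ne_zero
    have hI : (Complex.I : ℂ) ≠ 0 := Complex.I_ne_zero
    have : (q : ℂ) = 2 * n := by
      field_simp at h
      have := mul_right_cancel₀ hI (by push_cast at h; linear_combination (↑Real.pi * Complex.I) * h : (Real.pi:ℂ) * q * Complex.I = (2*n*Real.pi) * Complex.I)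
      have h2 := mul_left_cancel₀ hπ (by linear_combination this : (Real.pi:ℂ) * q = Real.pi * (2*n))
      exact h2
    exact_mod_cast this
  · rintro ⟨n, h⟩
    exact ⟨n, by rw [h]; push_cast; ring⟩

lemma E_pow (q : ℚ) (n : ℕ) : E q ^ n = E (q * n) := by
  induction n with
  | zero => simp [E]
  | succ n ih =>
    rw [pow_succ, ih, ← E_add]
    congr 1
    push_cast
    ring

lemma I_mul_cot (a : ℕ) (ha : 2 ≤ a) (j : ℕ) :
    Complex.I * (Real.cot (Real.pi * (2 * (j:ℝ) + 1) / (2 * (a:ℝ))) : ℂ)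
      = ∑ x ∈ Finset.Ioo 0 a, E ((2 * (j:ℚ) + 1) * x / a) := by
  have ha0 : (a : ℚ) ≠ 0 := by positivity
  have ha0' : (a : ℝ) ≠ 0 := by positivity
  set c : ℚ := (2 * (j:ℚ) + 1) / (2 * a) with hc
  set z : ℂ := E c with hz
  have hz0 : z ≠ 0 := Complex.exp_ne_zero _
  have hw : z ^ 2 = E ((2 * (j:ℚ) + 1) / a) := by
    rw [hz, E_pow]
    congr 1
    rw [hc]
    push_cast
    field_simp
  have hodd : ∀ n : ℤ, (2 * (j:ℚ) + 1) / a ≠ 2 * n := by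
    intro n h
    rw [div_eq_iff ha0] at h
    have : (2 * (j:ℤ) + 1 : ℚ) = ((2 * n * a : ℤ) : ℚ) := by push_cast; push_cast at h; linarith
    have h2 : (2 * (j:ℤ) + 1) = 2 * n * a := by exact_mod_cast this
    have h3 : (2:ℤ) ∣ 2 * n * a := ⟨n * a, by ring⟩
    omega
  have hw1 : z ^ 2 ≠ 1 := by
    rw [hw]
    intro h
    obtain ⟨n, hn⟩ := (E_eq_one_iff _).1 h
    exact hodd n hn
  have harg : Real.pi * (2 * (j:ℝ) + 1) / (2 * (a:ℝ)) = Real.pi * (c : ℝ) := by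
    rw [hc]; push_cast; field_simp
  rw [harg]
  have hsin : Real.sin (Real.pi * (c:ℝ)) ≠ 0 := by
    rw [Real.sin_ne_zero_iff]
    intro n h
    have h' : Real.pi * (c:ℝ) = Real.pi * (n:ℝ) := by linarith [h]
    have hcq : (c : ℝ) = n := mul_left_cancel₀ Real.pi_ne_zero h'
    have : c = (n : ℚ) := by exact_mod_cast hcq
    rw [hc, div_eq_iff (by positivity : (2 * (a:ℚ)) ≠ 0)] at this
    have h2 : (2 * (j:ℤ) + 1 : ℚ) = ((n * (2 * a) : ℤ) : ℚ) := by push_cast; push_cast at this; linarith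
    have h3 : (2 * (j:ℤ) + 1) = n * (2 * a) := by exact_mod_cast h2
    have h4 : (2:ℤ) ∣ n * (2 * a) := ⟨n * a, by ring⟩
    omega
  have hcos : (Real.cos (Real.pi * (c:ℝ)) : ℂ) = (z + z⁻¹) / 2 := by
    rw [Complex.ofReal_cos, Complex.cos, hz, E]
    rw [← Complex.exp_neg]
    push_cast
    ring_nf
  have hsinC : (Real.sin (Real.pi * (c:ℝ)) : ℂ) = (z - z⁻¹) * Complex.I / (-2) := by
    rw [Complex.ofReal_sin, Complex.sin, hz, E]
    rw [← Complex.exp_neg]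
    push_cast
    ring_nf
  have hne : 1 - z ^ 2 ≠ 0 := by
    intro h
    apply hw1
    linear_combination -h
  have hne2 : z ^ 2 - 1 ≠ 0 := sub_ne_zero.2 hw1
  have hsum : ∑ x ∈ Finset.Ioo 0 a, E ((2 * (j:ℚ) + 1) * x / a)
      = (1 + z ^ 2) / (1 - z ^ 2) := by
    have hterm : ∀ x : ℕ, E ((2 * (j:ℚ) + 1) * x / a) = (z ^ 2) ^ x := by
      intro x
      rw [hw, E_pow]
      congr 1
      ring
    have hins : insert 0 (Finset.Ioo 0 a) = Finset.range a := by
      ext x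
      simp only [Finset.mem_insert, Finset.mem_Ioo, Finset.mem_range]
      omega
    have hpow_a : (z ^ 2) ^ a = -1 := by
      rw [hw, E_pow]
      have : (2 * (j:ℚ) + 1) / a * a = ((2 * (j:ℤ) + 1 : ℤ) : ℚ) := by
        push_cast; field_simp
      rw [this, E_int]
      have : Odd (2 * (j:ℤ) + 1) := ⟨j, by ring⟩
      exact Odd.neg_one_zpow this
    have hgeom : ∑ x ∈ Finset.range a, (z ^ 2) ^ x = ((z ^ 2) ^ a - 1) / (z ^ 2 - 1) :=
      geom_sum_eq hw1 a
    have h0 : (0 : ℕ) ∉ Finset.Ioo 0 a := by simp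
    have h1 : ∑ x ∈ Finset.range a, (z ^ 2) ^ x = 1 + ∑ x ∈ Finset.Ioo 0 a, (z ^ 2) ^ x := by
      rw [← hins, Finset.sum_insert h0, pow_zero]
    simp only [hterm]
    have heq : ∑ x ∈ Finset.Ioo 0 a, (z ^ 2) ^ x = ((z ^ 2) ^ a - 1) / (z ^ 2 - 1) - 1 := by
      linear_combination hgeom - h1
    rw [heq, hpow_a]
    field_simp
    ring
  rw [hsum, Complex.ofReal_cot, Complex.cot_eq_cos_div_sin,
    ← Complex.ofReal_cos, ← Complex.ofReal_sin]
  have hSne : (Real.sin (Real.pi * (c:ℝ)) : ℂ) ≠ 0 := by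
    exact Complex.ofReal_ne_zero.mpr hsin
  rw [mul_div_assoc', div_eq_div_iff hSne hne, hcos, hsinC]
  field_simp
  ring

lemma orth_sum (N : ℕ) (hN : 0 < N) (c : ℤ) :
    ∑ j ∈ Finset.range N, E ((2 * (j:ℚ) + 1) * c / N)
      = if (N:ℤ) ∣ c then (N : ℂ) * (-1 : ℂ) ^ (c / N) else 0 := by
  have hN0 : (N : ℚ) ≠ 0 := by positivity
  have hterm : ∀ j : ℕ, E ((2 * (j:ℚ) + 1) * c / N) = E ((c:ℚ)/N) * E (2 * c / N) ^ j := by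
    intro j
    rw [E_pow, ← E_add]
    congr 1
    field_simp
    ring
  simp only [hterm, ← Finset.mul_sum]
  by_cases h : (N:ℤ) ∣ c
  · obtain ⟨m, hm⟩ := h
    have hu : E (2 * c / N) = 1 := by
      refine (E_eq_one_iff _).2 ⟨m, ?_⟩
      rw [hm]
      push_cast
      field_simp
    have he : E ((c:ℚ)/N) = (-1:ℂ) ^ m := by
      have : (c : ℚ) / N = (m : ℤ) := by rw [hm]; push_cast; field_simp
      rw [this, E_int]
    have hdm : c / (N:ℤ) = m := by rw [hm]; exact Int.mul_ediv_cancel_left m (by exact_mod_cast hN.ne')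
    simp only [hu, one_pow, Finset.sum_const, Finset.card_range, nsmul_eq_mul, mul_one]
    rw [if_pos ⟨m, hm⟩, he, hdm]
    ring
  · have hu1 : E (2 * c / N) ≠ 1 := by
      intro hu
      obtain ⟨n, hn⟩ := (E_eq_one_iff _).1 hu
      apply h
      refine ⟨n, ?_⟩
      have : (c : ℚ) = ((N * n : ℤ) : ℚ) := by
        push_cast
        rw [div_eq_iff hN0] at hn
        linarith
      exact_mod_cast this
    have huN : E (2 * c / N) ^ N = 1 := by
      rw [E_pow]
      have : 2 * (c:ℚ) / N * N = ((2 * c : ℤ) : ℚ) := by push_cast; field_simp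
      rw [this, E_int]
      exact Even.neg_one_zpow ⟨c, by ring⟩
    rw [geom_sum_eq hu1, huN, if_neg h]
    simp

lemma E_sum {ι : Type*} (s : Finset ι) (f : ι → ℚ) : E (∑ i ∈ s, f i) = ∏ i ∈ s, E (f i) := by
  classical
  induction s using Finset.induction with
  | empty => simp [E]
  | insert _ _ h ih => rw [Finset.sum_insert h, E_add, ih, Finset.prod_insert h]

lemma sum_Ioo_cast (a : ℕ) (g : ℤ → ℂ) :
    ∑ x ∈ Finset.Ioo (0:ℤ) (a:ℤ), g x = ∑ x ∈ Finset.Ioo 0 a, g (x:ℤ) := by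
  refine Finset.sum_nbij' (fun x => x.toNat) (fun x => (x : ℤ)) ?_ ?_ ?_ ?_ ?_
  · intro x hx
    simp only [Finset.mem_Ioo] at hx ⊢
    omega
  · intro x hx
    simp only [Finset.mem_Ioo] at hx ⊢
    omega
  · intro x hx
    simp only [Finset.mem_Ioo] at hx
    show ((x.toNat : ℕ) : ℤ) = x
    omega
  · intro x hx
    show ((x : ℤ)).toNat = x
    omega
  · intro x hx
    simp only [Finset.mem_Ioo] at hx
    show g x = g (x.toNat : ℤ)
    congr 1
    omega

lemma y_collapse (N : ℕ) (hN : 0 < N) (c : ℤ) :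
    ∑ y ∈ Finset.Ioo (0:ℤ) (N:ℤ), (if (N:ℤ) ∣ (y + c) then (N:ℂ) * (-1:ℂ)^((y + c)/N) else 0)
      = if (N:ℤ) ∣ c then 0 else (N:ℂ) * (-1:ℂ)^(c/N + 1) := by
  have hNZ : (0:ℤ) < (N:ℤ) := by exact_mod_cast hN
  by_cases h : (N:ℤ) ∣ c
  · rw [if_pos h]
    apply Finset.sum_eq_zero
    intro y hy
    rw [Finset.mem_Ioo] at hy
    rw [if_neg]
    intro hd
    have : (N:ℤ) ∣ y := (Int.dvd_add_right h).mp (by rwa [add_comm] at hd)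
    have := Int.le_of_dvd hy.1 this
    omega
  · rw [if_neg h]
    set y₀ : ℤ := N - c % N with hy₀
    have hmod0 : c % N ≠ 0 := fun hm => h (Int.dvd_of_emod_eq_zero hm)
    have hmodlt : c % N < N := Int.emod_lt_of_pos c hNZ
    have hmodge : 0 ≤ c % N := Int.emod_nonneg c (by omega)
    have hdm : c = N * (c / N) + c % N := (Int.mul_ediv_add_emod c N).symm
    have hy₀mem : y₀ ∈ Finset.Ioo (0:ℤ) (N:ℤ) := by
      rw [Finset.mem_Ioo]
      omega
    have hy₀dvd : y₀ + c = N * (c / N + 1) := by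
      rw [hy₀]
      have hr : (N:ℤ) * (c / N + 1) = N * (c / N) + N := by ring
      omega
    rw [Finset.sum_eq_single_of_mem y₀ hy₀mem]
    · rw [hy₀dvd, if_pos ⟨c / N + 1, rfl⟩, Int.mul_ediv_cancel_left _ (by omega : (N:ℤ) ≠ 0)]
    · intro y hy hne
      rw [Finset.mem_Ioo] at hy
      rw [if_neg]
      rintro ⟨t, ht⟩
      apply hne
      have hdv : (N:ℤ) ∣ (y - y₀) := by
        refine ⟨t - (c / N + 1), ?_⟩
        have hr : (N:ℤ) * (t - (c / N + 1)) = N * t - N * (c / N + 1) := by ring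
        omega
      have habs : |y - y₀| < N := by
        rw [Finset.mem_Ioo] at hy₀mem
        rw [abs_lt]
        omega
      have := Int.eq_zero_of_abs_lt_dvd hdv habs
      omega

lemma cond_plus (N : ℕ) (hN : 0 < N) (c : ℤ) (s : ℚ) (hs : s = (c:ℚ)/N) :
    (∃ n : ℤ, s - 2*n ∈ Set.Ioo (0:ℚ) 1) ↔ (¬(N:ℤ) ∣ c ∧ Even (c / N)) := by
  have hN0 : (N:ℚ) ≠ 0 := by positivity
  have hfloor : ⌊s⌋ = c / N := by rw [hs]; exact Rat.floor_intCast_div_natCast c N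
  constructor
  · rintro ⟨n, hmem⟩
    rw [Set.mem_Ioo] at hmem
    obtain ⟨h0, h1⟩ := hmem
    have hfl : ⌊s⌋ = 2*n := by
      rw [Int.floor_eq_iff]
      constructor
      · push_cast; linarith
      · push_cast; linarith
    constructor
    · rintro ⟨t, ht⟩
      have hst : s = (t:ℚ) := by rw [hs, ht]; push_cast; field_simp
      have : (t:ℤ) = 2*n := by rw [← hfl, hst, Int.floor_intCast]
      rw [hst] at h0
      have : ((2*n:ℤ):ℚ) = (t:ℚ) := by exact_mod_cast this.symm
      push_cast at this
      linarith
    · exact ⟨n, by omega⟩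
  · rintro ⟨hndvd, n, hn⟩
    refine ⟨n, ?_⟩
    have hfl : ⌊s⌋ = 2*n := by omega
    have hle : ((2*n:ℤ):ℚ) ≤ s := by rw [← hfl]; exact Int.floor_le s
    have hlt : s < ((2*n:ℤ):ℚ) + 1 := by rw [← hfl]; exact Int.lt_floor_add_one s
    have hne : s ≠ ((2*n:ℤ):ℚ) := by
      intro hseq
      apply hndvd
      refine ⟨2*n, ?_⟩
      have : (c:ℚ) = ((N:ℤ) * (2*n) : ℤ) := by
        rw [hs] at hseq
        push_cast
        push_cast at hseq
        field_simp at hseq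
        linarith
      exact_mod_cast this
    rw [Set.mem_Ioo]
    push_cast at hle hlt hne
    constructor
    · rcases lt_or_eq_of_le hle with h | h
      · linarith
      · exact absurd h.symm hne
    · linarith

lemma cond_minus (N : ℕ) (hN : 0 < N) (c : ℤ) (s : ℚ) (hs : s = (c:ℚ)/N) :
    (∃ n : ℤ, s - 2*n ∈ Set.Ioo (1:ℚ) 2) ↔ (¬(N:ℤ) ∣ c ∧ Odd (c / N)) := by
  have hN0 : (N:ℚ) ≠ 0 := by positivity
  have hfloor : ⌊s⌋ = c / N := by rw [hs]; exact Rat.floor_intCast_div_natCast c N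
  constructor
  · rintro ⟨n, h0⟩
    rw [Set.mem_Ioo] at h0
    obtain ⟨h0, h1⟩ := h0
    have hfl : ⌊s⌋ = 2*n + 1 := by
      rw [Int.floor_eq_iff]
      constructor
      · push_cast; linarith
      · push_cast; linarith
    constructor
    · rintro ⟨t, ht⟩
      have hst : s = (t:ℚ) := by rw [hs, ht]; push_cast; field_simp
      have h2 : (t:ℤ) = 2*n + 1 := by rw [← hfl, hst, Int.floor_intCast]
      rw [hst] at h0
      have : ((2*n+1:ℤ):ℚ) = (t:ℚ) := by exact_mod_cast h2.symm
      push_cast at this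
      linarith
    · exact ⟨n, by omega⟩
  · rintro ⟨hndvd, n, hn⟩
    refine ⟨n, ?_⟩
    have hfl : ⌊s⌋ = 2*n + 1 := by omega
    have hle : ((2*n+1:ℤ):ℚ) ≤ s := by rw [← hfl]; exact Int.floor_le s
    have hlt : s < ((2*n+1:ℤ):ℚ) + 1 := by rw [← hfl]; exact Int.lt_floor_add_one s
    have hne : s ≠ ((2*n+1:ℤ):ℚ) := by
      intro hseq
      apply hndvd
      refine ⟨2*n+1, ?_⟩
      have : (c:ℚ) = ((N:ℤ) * (2*n+1) : ℤ) := by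
        rw [hs] at hseq
        push_cast
        push_cast at hseq
        field_simp at hseq
        linarith
      exact_mod_cast this
    rw [Set.mem_Ioo]
    push_cast at hle hlt hne
    constructor
    · rcases lt_or_eq_of_le hle with h | h
      · linarith
      · exact absurd h.symm hne
    · linarith

lemma I_mul_cot_int (a : ℕ) (ha : 2 ≤ a) (j : ℕ) :
    Complex.I * (Real.cot (Real.pi * (2 * (j:ℝ) + 1) / (2 * (a:ℝ))) : ℂ)
      = ∑ x ∈ Finset.Ioo (0:ℤ) (a:ℤ), E ((2 * (j:ℚ) + 1) * (x:ℚ) / a) := by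
  rw [sum_Ioo_cast a (fun x => E ((2 * (j:ℚ) + 1) * (x:ℚ) / a)), I_mul_cot a ha j]
  refine Finset.sum_congr rfl fun x _ => ?_
  norm_num


/-- Zagier's cotangent formula for the Brieskorn signature: for integers `a i ≥ 2`
(a `(2k+1)`-tuple) and `N` any (positive) common multiple of the `a i`,
`τ(a) = ((-1)^k / N) * ∑_{j=0}^{N-1} cot(π(2j+1)/(2N)) * ∏ i, cot(π(2j+1)/(2 a i))`. -/
theorem brieskornTau_eq_zagier_cotangent_sum (k : ℕ) (hk : 1 ≤ k)
    (a : Fin (2 * k + 1) → ℕ) (ha : ∀ i, 2 ≤ a i)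
    (N : ℕ) (hNpos : 0 < N) (hN : ∀ i, a i ∣ N) :
    (brieskornTau a : ℝ) = (-1 : ℝ) ^ k / (N : ℝ) *
      ∑ j ∈ Finset.range N,
        Real.cot (Real.pi * (2 * (j : ℝ) + 1) / (2 * (N : ℝ))) *
          ∏ i, Real.cot (Real.pi * (2 * (j : ℝ) + 1) / (2 * (a i : ℝ))) := by
  classical
  have hN2 : 2 ≤ N := le_trans (ha 0) (Nat.le_of_dvd hNpos (hN 0))
  have hN0 : (N:ℚ) ≠ 0 := by positivity
  have hNC : (N:ℂ) ≠ 0 := by exact_mod_cast (by positivity : (N:ℝ) ≠ 0)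
  set P : Finset (Fin (2*k+1) → ℤ) := Fintype.piFinset (fun i => Finset.Ioo (0:ℤ) (a i : ℤ)) with hP
  set c : (Fin (2*k+1) → ℤ) → ℤ := fun x => ∑ i, ((N / a i : ℕ) : ℤ) * x i with hcdef
  have ha0 : ∀ i, (a i : ℚ) ≠ 0 := fun i => by have := ha i; positivity
  have haN : ∀ i, ((N / a i : ℕ) : ℚ) * (a i : ℚ) = (N:ℚ) := by
    intro i
    exact_mod_cast Nat.div_mul_cancel (hN i)
  have hs : ∀ x : Fin (2*k+1) → ℤ, (∑ i, (x i : ℚ)/(a i : ℚ)) = ((c x : ℤ):ℚ)/N := by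
    intro x
    rw [hcdef]
    rw [show (((∑ i, ((N / a i : ℕ) : ℤ) * x i : ℤ)) : ℚ) = ∑ i, ((N / a i : ℕ) : ℚ) * (x i : ℚ) by push_cast [-Int.natCast_ediv, -Nat.cast_div]; rfl]
    rw [Finset.sum_div]
    refine Finset.sum_congr rfl fun i _ => ?_
    rw [div_eq_div_iff (ha0 i) hN0]
    linear_combination (-((x i : ℤ) : ℚ)) * (haN i)
  -- counting side
  have hTau : ((brieskornTau a : ℤ) : ℂ)
      = ∑ x ∈ P, (if (N:ℤ) ∣ c x then 0 else (-1:ℂ)^(c x / N)) := by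
    rw [brieskornTau]
    have hmem : ∀ x : Fin (2*k+1) → ℤ, x ∈ P ↔ (∀ i, 0 < x i ∧ x i < (a i:ℤ)) := by
      intro x
      rw [hP, Fintype.mem_piFinset]
      simp [Finset.mem_Ioo]
    have h1 : {x : Fin (2*k+1) → ℤ | (∀ i, 0 < x i ∧ x i < (a i:ℤ)) ∧
          ∃ n:ℤ, (∑ i, (x i:ℚ)/(a i:ℚ)) - 2*n ∈ Set.Ioo (0:ℚ) 1}
        = ↑(P.filter (fun x => ¬(N:ℤ) ∣ c x ∧ Even (c x / N))) := by
      ext x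
      simp only [Set.mem_setOf_eq, Finset.coe_filter, Set.mem_setOf_eq, Finset.mem_filter, Finset.mem_coe, hmem]
      rw [cond_plus N hNpos (c x) _ (hs x)]
    have h2 : {x : Fin (2*k+1) → ℤ | (∀ i, 0 < x i ∧ x i < (a i:ℤ)) ∧
          ∃ n:ℤ, (∑ i, (x i:ℚ)/(a i:ℚ)) - 2*n ∈ Set.Ioo (1:ℚ) 2}
        = ↑(P.filter (fun x => ¬(N:ℤ) ∣ c x ∧ Odd (c x / N))) := by
      ext x
      simp only [Set.mem_setOf_eq, Finset.coe_filter, Set.mem_setOf_eq, Finset.mem_filter, Finset.mem_coe, hmem]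
      rw [cond_minus N hNpos (c x) _ (hs x)]
    rw [h1, h2, Set.ncard_coe_finset, Set.ncard_coe_finset]
    rw [Finset.card_filter, Finset.card_filter]
    push_cast
    rw [← Finset.sum_sub_distrib]
    refine Finset.sum_congr rfl fun x hx => ?_
    by_cases hd : (N:ℤ) ∣ c x
    · simp [hd]
    · rcases Int.even_or_odd (c x / N) with he | ho
      · rw [if_pos ⟨hd, he⟩, if_neg (fun h => (Int.not_odd_iff_even.mpr he) h.2),
          if_neg hd, Even.neg_one_zpow he]
        norm_num
      · rw [if_neg (fun h => (Int.not_even_iff_odd.mpr ho) h.2), if_pos ⟨hd, ho⟩,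
          if_neg hd, Odd.neg_one_zpow ho]
        norm_num
  -- analytic side
  have hkey : ∀ j : ℕ,
      (Complex.I * (Real.cot (Real.pi * (2*(j:ℝ)+1) / (2*(N:ℝ))) : ℂ)) *
        ∏ i, (Complex.I * (Real.cot (Real.pi * (2*(j:ℝ)+1) / (2*(a i:ℝ))) : ℂ))
      = ∑ x ∈ P, ∑ y ∈ Finset.Ioo (0:ℤ) (N:ℤ), E ((2*(j:ℚ)+1) * ((y + c x : ℤ):ℚ) / N) := by
    intro j
    have hprod : ∏ i, (Complex.I * (Real.cot (Real.pi * (2*(j:ℝ)+1) / (2*(a i:ℝ))) : ℂ))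
        = ∑ x ∈ P, E ((2*(j:ℚ)+1) * ((c x : ℤ):ℚ)/N) := by
      rw [Finset.prod_congr rfl (fun i _ => I_mul_cot_int (a i) (ha i) j)]
      rw [hP, Finset.prod_univ_sum]
      refine Finset.sum_congr rfl fun x hx => ?_
      rw [← E_sum]
      congr 1
      have h1 : ∑ i, (2*(j:ℚ)+1) * (x i:ℚ)/(a i:ℚ) = (2*(j:ℚ)+1) * ∑ i, (x i:ℚ)/(a i:ℚ) := by
        rw [Finset.mul_sum]
        exact Finset.sum_congr rfl fun i _ => (mul_div_assoc _ _ _)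
      rw [h1, hs x, mul_div_assoc]
    rw [I_mul_cot_int N hN2 j, hprod, Finset.sum_mul_sum, Finset.sum_comm]
    refine Finset.sum_congr rfl fun x _ => Finset.sum_congr rfl fun y _ => ?_
    rw [← E_add]
    congr 1
    push_cast
    field_simp
  have hS : ∑ j ∈ Finset.range N,
      ((Complex.I * (Real.cot (Real.pi * (2*(j:ℝ)+1) / (2*(N:ℝ))) : ℂ)) *
        ∏ i, (Complex.I * (Real.cot (Real.pi * (2*(j:ℝ)+1) / (2*(a i:ℝ))) : ℂ)))
      = ∑ x ∈ P, (if (N:ℤ) ∣ c x then 0 else (N:ℂ) * (-1:ℂ)^(c x / N + 1)) := by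
    rw [Finset.sum_congr rfl (fun j _ => hkey j), Finset.sum_comm]
    refine Finset.sum_congr rfl fun x hx => ?_
    rw [Finset.sum_comm]
    rw [Finset.sum_congr rfl (fun y _ => orth_sum N hNpos (y + c x))]
    exact y_collapse N hNpos (c x)
  have hI2 : Complex.I * Complex.I^(2*k+1) = (-1:ℂ)^(k+1) := by
    rw [← pow_succ', show 2*k+1+1 = 2*(k+1) by ring, pow_mul, Complex.I_sq]
  have hT : ∑ j ∈ Finset.range N,
      ((Complex.I * (Real.cot (Real.pi * (2*(j:ℝ)+1) / (2*(N:ℝ))) : ℂ)) *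
        ∏ i, (Complex.I * (Real.cot (Real.pi * (2*(j:ℝ)+1) / (2*(a i:ℝ))) : ℂ)))
      = (-1:ℂ)^(k+1) * ∑ j ∈ Finset.range N,
          (Real.cot (Real.pi * (2*(j:ℝ)+1) / (2*(N:ℝ))) : ℂ) *
            ∏ i, (Real.cot (Real.pi * (2*(j:ℝ)+1) / (2*(a i:ℝ))) : ℂ) := by
    rw [Finset.mul_sum]
    refine Finset.sum_congr rfl fun j _ => ?_
    rw [Finset.prod_mul_distrib, Finset.prod_const, Finset.card_univ, Fintype.card_fin]
    linear_combination ((Real.cot (Real.pi * (2*(j:ℝ)+1) / (2*(N:ℝ))) : ℂ) *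
      ∏ i, (Real.cot (Real.pi * (2*(j:ℝ)+1) / (2*(a i:ℝ))) : ℂ)) * hI2
  have hSχ : ∑ x ∈ P, (if (N:ℤ) ∣ c x then 0 else (N:ℂ) * (-1:ℂ)^(c x / N + 1))
      = (-(N:ℂ)) * ∑ x ∈ P, (if (N:ℤ) ∣ c x then 0 else (-1:ℂ)^(c x / N)) := by
    rw [Finset.mul_sum]
    refine Finset.sum_congr rfl fun x hx => ?_
    by_cases hd : (N:ℤ) ∣ c x
    · simp [hd]
    · rw [if_neg hd, if_neg hd, zpow_add_one₀ (by norm_num : (-1:ℂ) ≠ 0)]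
      ring
  have heq2 : (-1:ℂ)^(k+1) * (∑ j ∈ Finset.range N,
          (Real.cot (Real.pi * (2*(j:ℝ)+1) / (2*(N:ℝ))) : ℂ) *
            ∏ i, (Real.cot (Real.pi * (2*(j:ℝ)+1) / (2*(a i:ℝ))) : ℂ))
      = (-(N:ℂ)) * ∑ x ∈ P, (if (N:ℤ) ∣ c x then 0 else (-1:ℂ)^(c x / N)) := by
    rw [← hT, hS, hSχ]
  have hfinal : ((brieskornTau a : ℤ) : ℂ) = (-1:ℂ)^k/(N:ℂ) *
      ∑ j ∈ Finset.range N,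
        (Real.cot (Real.pi * (2*(j:ℝ)+1) / (2*(N:ℝ))) : ℂ) *
          ∏ i, (Real.cot (Real.pi * (2*(j:ℝ)+1) / (2*(a i:ℝ))) : ℂ) := by
    rw [hTau]
    rw [pow_succ] at heq2
    rw [div_mul_eq_mul_div, eq_div_iff hNC]
    linear_combination heq2
  exact_mod_cast hfinal
end

section
/- Let m > 3 and let a = (a_1 ≤ a_2 ≤ … ≤ a_m) be an m-tuple of positive integers satisfying KE conditions (1) and (2) and the sphere condition. Then the product of the first m-1 entries satisfies a_1·a_2···a_{m-1} ≤ m!·(c_m - 1), where (c_k) is the extremal sequence; consequently if Σ_{i=1}^{m-1} 1/a_i > 1 then Σ_{i=1}^{m-1} 1/a_i > 1 + 1/(m!·(c_m - 1)). -/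
open Finset Real

theorem sum_mul_nonneg_of_antitone {R : Type*} [Ring R] [PartialOrder R] [IsOrderedRing R]
    {f g : ℕ → R} {n : ℕ} (hf : Antitone f) (hf₀ : ∀ i, 0 ≤ f i)
    (hg : ∀ j ≤ n, 0 ≤ ∑ i ∈ range j, g i) :
    0 ≤ ∑ i ∈ range n, f i * g i := by
  have hpartial : ∀ j ≤ n, f j * ∑ i ∈ range j, g i ≤ ∑ i ∈ range j, f i * g i := by
    intro j
    induction j with
    | zero => simp
    | succ j ih =>
      intro hj
      calc f (j + 1) * ∑ i ∈ range (j + 1), g i ≤ f j * ∑ i ∈ range (j + 1), g i :=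
            mul_le_mul_of_nonneg_right (hf j.le_succ) (hg _ hj)
        _ = f j * ∑ i ∈ range j, g i + f j * g j := by rw [sum_range_succ, mul_add]
        _ ≤ ∑ i ∈ range (j + 1), f i * g i := by
            rw [sum_range_succ]; gcongr; exact ih (by omega)
  exact (mul_nonneg (hf₀ n) (hg n le_rfl)).trans (hpartial n le_rfl)

/-- Multiplicative majorization. The tangent bound `y log (x / y) ≤ x - y` reduces it to
`∑ y i (log x i - log y i) ≥ 0`, which is Abel summation against the nonincreasing `y`. -/
theorem sum_le_sum_of_prod_le_prod {x y : ℕ → ℝ} {n : ℕ} (hx : ∀ i, 0 < x i)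
    (hy : ∀ i, 0 < y i) (hanti : Antitone y)
    (h : ∀ j ≤ n, ∏ i ∈ range j, y i ≤ ∏ i ∈ range j, x i) :
    ∑ i ∈ range n, y i ≤ ∑ i ∈ range n, x i := by
  have hlog : ∀ j ≤ n, 0 ≤ ∑ i ∈ range j, (log (x i) - log (y i)) := by
    intro j hj
    rw [sum_sub_distrib, ← log_prod fun i _ => (hx i).ne', ← log_prod fun i _ => (hy i).ne']
    exact sub_nonneg.2 (log_le_log (prod_pos fun i _ => hy i) (h j hj))
  have htangent : ∀ i, y i * (log (x i) - log (y i)) ≤ x i - y i := by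
    intro i
    have := log_le_sub_one_of_pos (div_pos (hx i) (hy i))
    rw [log_div (hx i).ne' (hy i).ne'] at this
    calc y i * (log (x i) - log (y i)) ≤ y i * (x i / y i - 1) :=
          mul_le_mul_of_nonneg_left this (hy i).le
      _ = x i - y i := by rw [mul_sub, mul_div_cancel₀ _ (hy i).ne', mul_one]
  have := sum_mul_nonneg_of_antitone hanti (fun i => (hy i).le) hlog
  have := sum_le_sum fun i (_ : i ∈ range n) => htangent i
  rw [sum_sub_distrib] at this
  linarith

theorem prod_mul_sum_one_div {ι K : Type*} [Field K] [CharZero K] [DecidableEq ι]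
    (s : Finset ι) (a : ι → ℕ) (ha : ∀ i ∈ s, a i ≠ 0) :
    (∏ i ∈ s, (a i : K)) * ∑ i ∈ s, 1 / (a i : K) =
      ((∑ i ∈ s, ∏ j ∈ s.erase i, a j : ℕ) : K) := by
  rw [mul_sum]
  push_cast
  refine sum_congr rfl fun i hi => ?_
  rw [← mul_prod_erase s _ hi]
  have : (a i : K) ≠ 0 := Nat.cast_ne_zero.2 (ha i hi)
  field_simp

theorem one_div_prod_le_abs_sum_one_div_sub_one {ι K : Type*} [Field K] [LinearOrder K]
    [IsStrictOrderedRing K] (s : Finset ι) (a : ι → ℕ) (ha : ∀ i ∈ s, 0 < a i)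
    (h : ∑ i ∈ s, 1 / (a i : K) ≠ 1) :
    1 / (∏ i ∈ s, (a i : K)) ≤ |∑ i ∈ s, 1 / (a i : K) - 1| := by
  classical
  have hP : (0 : K) < ∏ i ∈ s, (a i : K) := prod_pos fun i hi => Nat.cast_pos.2 (ha i hi)
  have hN := prod_mul_sum_one_div (K := K) s a fun i hi => (ha i hi).ne'
  set N := ∑ i ∈ s, ∏ j ∈ s.erase i, a j
  have hNP : ((N : ℤ) - ∏ i ∈ s, (a i : ℤ)) ≠ 0 := by
    intro h0
    apply h
    have : (N : K) = ∏ i ∈ s, (a i : K) := by exact_mod_cast sub_eq_zero.1 h0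
    rw [this] at hN
    exact (mul_eq_left₀ hP.ne').1 hN
  have h1 : (1 : K) ≤ |(N : K) - ∏ i ∈ s, (a i : K)| := by
    exact_mod_cast Int.one_le_abs hNP
  rw [div_le_iff₀ hP, ← abs_of_pos hP, ← abs_mul, sub_mul, mul_comm, hN, one_mul]
  exact h1

/-- `sylvesterProd P n` is the denominator left after `n` greedy steps from `1 / P`:
`1 / P = ∑ t < n, 1 / (sylvesterProd P t + 1) + 1 / sylvesterProd P n`. For `P = 1` it is the
product `c 1 * ⋯ * c n = c (n + 1) - 1` of the first `n` Sylvester numbers. -/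
def sylvesterProd (P : ℕ) : ℕ → ℕ
  | 0 => P
  | n + 1 => sylvesterProd P n * (sylvesterProd P n + 1)

theorem sylvesterProd_pos {P : ℕ} (hP : 0 < P) : ∀ n, 0 < sylvesterProd P n
  | 0 => hP
  | n + 1 => Nat.mul_pos (sylvesterProd_pos hP n) (Nat.succ_pos _)

theorem sylvesterProd_mono_left {P Q : ℕ} (h : P ≤ Q) :
    ∀ n, sylvesterProd P n ≤ sylvesterProd Q n
  | 0 => h
  | n + 1 => Nat.mul_le_mul (sylvesterProd_mono_left h n)
      (Nat.add_le_add_right (sylvesterProd_mono_left h n) 1)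

theorem sylvesterProd_add (P k : ℕ) :
    ∀ t, sylvesterProd P (k + t) = sylvesterProd (sylvesterProd P k) t
  | 0 => rfl
  | t + 1 => by rw [← Nat.add_assoc, sylvesterProd, sylvesterProd, sylvesterProd_add P k t]

theorem mul_prod_range_sylvesterProd_add_one (P : ℕ) : ∀ n,
    P * ∏ t ∈ range n, (sylvesterProd P t + 1) = sylvesterProd P n
  | 0 => by simp [sylvesterProd]
  | n + 1 => by
    rw [prod_range_succ, ← mul_assoc, mul_prod_range_sylvesterProd_add_one P n]
    rfl

theorem prod_range_sylvesterProd_le {P : ℕ} (hP : 0 < P) : ∀ n,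
    ∏ k ∈ range n, sylvesterProd P k ≤ sylvesterProd P n
  | 0 => by simpa [sylvesterProd] using Nat.one_le_of_lt hP
  | n + 1 => by
    rw [prod_range_succ, sylvesterProd, mul_comm]
    exact Nat.mul_le_mul_left _ ((prod_range_sylvesterProd_le hP n).trans (Nat.le_succ _))

theorem sum_range_one_div_sylvesterProd_add_one {K : Type*} [Field K] [CharZero K] {P : ℕ}
    (hP : 0 < P) : ∀ n, ∑ t ∈ range n, 1 / ((sylvesterProd P t : K) + 1) =
      1 / (P : K) - 1 / (sylvesterProd P n : K)
  | 0 => by simp [sylvesterProd]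
  | n + 1 => by
    have h₀ : (sylvesterProd P n : K) ≠ 0 := Nat.cast_ne_zero.2 (sylvesterProd_pos hP n).ne'
    have h₁ : (sylvesterProd P n : K) + 1 ≠ 0 := by
      exact_mod_cast (sylvesterProd P n).succ_ne_zero
    rw [sum_range_succ, sum_range_one_div_sylvesterProd_add_one hP n, sylvesterProd]
    push_cast
    field_simp
    ring

theorem extremal_succ : ∀ n, extremal (n + 1) = sylvesterProd 1 n + 1
  | 0 => rfl
  | n + 1 => by
    rw [extremal, extremal_succ n, sylvesterProd]
    have h : sylvesterProd 1 n * (sylvesterProd 1 n + 1) + (sylvesterProd 1 n + 1) =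
        (sylvesterProd 1 n + 1) ^ 2 := by ring
    omega

theorem sum_range_one_div_le_of_sylvesterProd_le {a : ℕ → ℕ} (hpos : ∀ i, 0 < a i)
    (hmono : Monotone a) {P n : ℕ} (hP : 0 < P)
    (hdom : ∀ j ≤ n, sylvesterProd P j ≤ P * ∏ t ∈ range j, a t) :
    ∑ t ∈ range n, (1 : ℚ) / a t ≤ 1 / P - 1 / sylvesterProd P n := by
  rw [← sum_range_one_div_sylvesterProd_add_one hP]
  have hprod : ∀ j ≤ n, ∏ t ∈ range j, (sylvesterProd P t + 1) ≤ ∏ t ∈ range j, a t :=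
    fun j hj => Nat.le_of_mul_le_mul_left
      ((mul_prod_range_sylvesterProd_add_one P j).trans_le (hdom j hj)) hP
  have := sum_le_sum_of_prod_le_prod (n := n)
    (x := fun t => 1 / ((sylvesterProd P t : ℝ) + 1)) (y := fun t => 1 / (a t : ℝ))
    (fun t => by positivity) (fun t => by have := hpos t; positivity)
    (fun i j hij => one_div_le_one_div_of_le (by exact_mod_cast hpos i)
      (by exact_mod_cast hmono hij))
    (fun j hj => by
      simp only [one_div, prod_inv_distrib]
      exact inv_anti₀ (prod_pos fun t _ => by positivity) (by exact_mod_cast hprod j hj))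
  rw [← Rat.cast_le (K := ℝ)]
  push_cast
  exact this

/-- Curtiss' theorem: Sylvester's sequence gives the best under-approximation of `1` by `n`
unit fractions. `k` is the last index at which the prefix product of `a` does not exceed that of
Sylvester's sequence; past it, the tail of `a` is dominated by the greedy continuation from the
head. -/
theorem one_div_sylvesterProd_le_one_sub_sum {a : ℕ → ℕ} (hpos : ∀ i, 0 < a i)
    (hmono : Monotone a) {n : ℕ} (h : ∑ i ∈ range n, (1 : ℚ) / a i < 1) :
    1 / (sylvesterProd 1 n : ℚ) ≤ 1 - ∑ i ∈ range n, (1 : ℚ) / a i := by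
  classical
  set k := Nat.findGreatest (fun j => ∏ i ∈ range j, a i ≤ sylvesterProd 1 j) n
  have hkn : k ≤ n := Nat.findGreatest_le n
  have hk : ∏ i ∈ range k, a i ≤ sylvesterProd 1 k :=
    Nat.findGreatest_spec (P := fun j => ∏ i ∈ range j, a i ≤ sylvesterProd 1 j)
      (Nat.zero_le n) (by simp [sylvesterProd])
  have hgt : ∀ j, k < j → j ≤ n → sylvesterProd 1 j < ∏ i ∈ range j, a i :=
    fun j hkj hjn => not_le.1 (Nat.findGreatest_is_greatest
      (P := fun j => ∏ i ∈ range j, a i ≤ sylvesterProd 1 j) hkj hjn)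
  set P := ∏ i ∈ range k, a i
  have hP : 0 < P := prod_pos fun i _ => hpos i
  have htail : ∑ t ∈ range (n - k), (1 : ℚ) / a (k + t) ≤
      1 / P - 1 / sylvesterProd P (n - k) := by
    refine sum_range_one_div_le_of_sylvesterProd_le (fun t => hpos _)
      (fun i j hij => hmono (by omega)) hP fun j hj => ?_
    rw [← prod_range_add]
    rcases j.eq_zero_or_pos with rfl | hj₀
    · simp [sylvesterProd, P]
    calc sylvesterProd P j ≤ sylvesterProd (sylvesterProd 1 k) j := sylvesterProd_mono_left hk j
      _ = sylvesterProd 1 (k + j) := (sylvesterProd_add 1 k j).symm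
      _ ≤ ∏ i ∈ range (k + j), a i := (hgt _ (by omega) (by omega)).le
  have hhead : 1 / (P : ℚ) ≤ 1 - ∑ i ∈ range k, (1 : ℚ) / a i := by
    have hlt : ∑ i ∈ range k, (1 : ℚ) / a i < 1 :=
      (sum_le_sum_of_subset_of_nonneg (range_mono hkn) fun i _ _ => by positivity).trans_lt h
    have := one_div_prod_le_abs_sum_one_div_sub_one (K := ℚ) (range k) a
      (fun i _ => hpos i) hlt.ne
    rwa [abs_sub_comm, abs_of_pos (sub_pos.2 hlt), ← Nat.cast_prod] at this
  calc 1 / (sylvesterProd 1 n : ℚ) ≤ 1 / (sylvesterProd P (n - k) : ℚ) := by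
        refine one_div_le_one_div_of_le (by exact_mod_cast sylvesterProd_pos hP _) ?_
        calc (sylvesterProd P (n - k) : ℚ) ≤ sylvesterProd (sylvesterProd 1 k) (n - k) := by
              exact_mod_cast sylvesterProd_mono_left hk _
          _ = sylvesterProd 1 n := by rw [← sylvesterProd_add, Nat.add_sub_cancel' hkn]
    _ ≤ 1 - ∑ i ∈ range n, (1 : ℚ) / a i := by
        rw [← Nat.add_sub_cancel' hkn, sum_range_add, Nat.add_sub_cancel' hkn]
        linarith

theorem lt_mul_sylvesterProd_of_one_lt_sum {a : ℕ → ℕ} (hpos : ∀ i, 0 < a i)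
    (hmono : Monotone a) {k m : ℕ} (hkm : k ≤ m) (hpre : ∑ i ∈ range k, (1 : ℚ) / a i < 1)
    (htot : 1 < ∑ i ∈ range m, (1 : ℚ) / a i) :
    a k < (m - k) * sylvesterProd 1 k := by
  have hak : (0 : ℚ) < a k := by exact_mod_cast hpos k
  have hs : (0 : ℚ) < sylvesterProd 1 k := by exact_mod_cast sylvesterProd_pos one_pos k
  have htail : ∑ t ∈ range (m - k), (1 : ℚ) / a (k + t) ≤ (m - k : ℕ) / a k := by
    calc ∑ t ∈ range (m - k), (1 : ℚ) / a (k + t)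
          ≤ ∑ t ∈ range (m - k), (1 : ℚ) / a k :=
          sum_le_sum fun t _ =>
            one_div_le_one_div_of_le hak (by exact_mod_cast hmono (by omega))
      _ = (m - k : ℕ) / a k := by rw [sum_const, card_range, nsmul_eq_mul, mul_one_div]
  have hcurtiss := one_div_sylvesterProd_le_one_sub_sum hpos hmono hpre
  rw [← Nat.add_sub_cancel' hkm, sum_range_add] at htot
  have : 1 / (sylvesterProd 1 k : ℚ) < (m - k : ℕ) / a k := by linarith
  rw [div_lt_div_iff₀ hs hak, one_mul] at this
  exact_mod_cast this

theorem prod_range_lt_factorial_mul_sylvesterProd {a : ℕ → ℕ} (hpos : ∀ i, 0 < a i)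
    (hmono : Monotone a) {m : ℕ} (hm : 2 ≤ m)
    (hpre : ∑ i ∈ range (m - 2), (1 : ℚ) / a i < 1)
    (htot : 1 < ∑ i ∈ range m, (1 : ℚ) / a i) :
    ∏ k ∈ range (m - 1), a k < m.factorial * sylvesterProd 1 (m - 1) := by
  have hentry : ∀ k ∈ range (m - 1), a k < (m - k) * sylvesterProd 1 k := by
    intro k hk
    rw [mem_range] at hk
    refine lt_mul_sylvesterProd_of_one_lt_sum hpos hmono (by omega) ?_ htot
    exact (sum_le_sum_of_subset_of_nonneg (range_mono (by omega))
      fun i _ _ => by positivity).trans_lt hpre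
  calc ∏ k ∈ range (m - 1), a k < ∏ k ∈ range (m - 1), (m - k) * sylvesterProd 1 k :=
        prod_lt_prod_of_nonempty (fun i _ => hpos i) hentry (nonempty_range_iff.2 (by omega))
    _ = m.descFactorial (m - 1) * ∏ k ∈ range (m - 1), sylvesterProd 1 k := by
        rw [prod_mul_distrib, Nat.descFactorial_eq_prod_range]
    _ ≤ m.factorial * sylvesterProd 1 (m - 1) := by
        have h := Nat.factorial_mul_descFactorial (show m - 1 ≤ m by omega)
        rw [show m - (m - 1) = 1 by omega, Nat.factorial_one, one_mul] at h
        rw [h]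
        exact Nat.mul_le_mul_left _ (prod_range_sylvesterProd_le one_pos _)

theorem sum_range_sub_two_lt_one {a : ℕ → ℕ} (hpos : ∀ i, 0 < a i) (hmono : Monotone a)
    {m : ℕ} (hm : 3 < m)
    (h : ∑ i ∈ range m, (1 : ℚ) / a i <
      1 + ((m : ℚ) - 1) / ((m : ℚ) - 2) * (1 / a (m - 1))) :
    ∑ i ∈ range (m - 2), (1 : ℚ) / a i < 1 := by
  have hlast : (0 : ℚ) < 1 / a (m - 1) := by have := hpos (m - 1); positivity
  have hle : (1 : ℚ) / a (m - 1) ≤ 1 / a (m - 2) :=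
    one_div_le_one_div_of_le (by exact_mod_cast hpos _) (by exact_mod_cast hmono (by omega))
  have hratio : ((m : ℚ) - 1) / ((m : ℚ) - 2) < 2 := by
    have : (3 : ℚ) < m := by exact_mod_cast hm
    rw [div_lt_iff₀ (by linarith)]
    linarith
  have hsplit : ∑ i ∈ range m, (1 : ℚ) / a i =
      ∑ i ∈ range (m - 2), (1 : ℚ) / a i + 1 / a (m - 2) + 1 / a (m - 1) := by
    obtain ⟨n, rfl⟩ : ∃ n, m = n + 2 := ⟨m - 2, by omega⟩
    simp [sum_range_succ]
  have := mul_lt_mul_of_pos_right hratio hlast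
  linarith

theorem finMin_eq_of_forall_le {α : Type*} [Fintype α] {f : α → ℚ} {i₀ : α}
    (h : ∀ i, f i₀ ≤ f i) : finMin f = f i₀ := by
  rw [finMin, dif_pos ⟨i₀, mem_univ _⟩]
  exact le_antisymm (inf'_le _ (mem_univ _)) (le_inf' _ _ fun i _ => h i)

@[to_additive]
theorem Fin.prod_filter_val_lt {M : Type*} [CommMonoid M] {m K : ℕ} (hK : K ≤ m)
    (f : ℕ → M) :
    ∏ i ∈ univ.filter (fun i : Fin m => (i : ℕ) < K), f i = ∏ k ∈ range K, f k := by
  rw [prod_filter, Fin.prod_univ_eq_prod_range (fun k => if k < K then f k else 1),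
    ← prod_filter]
  congr 1
  ext k
  simp only [mem_filter, mem_range]
  omega

theorem prod_first_entries_bound_general (m : ℕ) (hm : 3 < m) (a : Fin m → ℕ)
    (hmono : Monotone a) (hpos : ∀ i, 0 < a i)
    (h1 : KE1 a) (h2 : KE2 a) :
    (∏ i ∈ Finset.univ.filter (fun i : Fin m => (i : ℕ) < m - 1), a i) ≤
      m.factorial * (extremal m - 1) ∧
    (1 < ∑ i ∈ Finset.univ.filter (fun i : Fin m => (i : ℕ) < m - 1), (1 : ℚ) / (a i : ℚ) →
      1 + 1 / ((m.factorial * (extremal m - 1) : ℕ) : ℚ) <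
        ∑ i ∈ Finset.univ.filter (fun i : Fin m => (i : ℕ) < m - 1), (1 : ℚ) / (a i : ℚ)) := by
  set A : ℕ → ℕ := fun k => a ⟨min k (m - 1), by omega⟩
  have hA : ∀ i : Fin m, A i = a i := fun i => congrArg a (Fin.ext (by simp; omega))
  have hApos : ∀ k, 0 < A k := fun k => hpos _
  have hAmono : Monotone A := fun i j hij => hmono (Fin.mk_le_mk.2 (by omega))
  have hrecip : recipSum a = ∑ k ∈ range m, (1 : ℚ) / A k := by
    rw [recipSum, ← Fin.sum_univ_eq_sum_range (fun k => (1 : ℚ) / A k)]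
    simp only [hA]
  have hfinMin : finMin (fun i : Fin m => (1 : ℚ) / a i) = 1 / A (m - 1) := by
    rw [finMin_eq_of_forall_le (i₀ := ⟨m - 1, by omega⟩), ← hA]
    exact fun i => one_div_le_one_div_of_le (by exact_mod_cast hpos i)
      (by exact_mod_cast hmono (Fin.mk_le_mk.2 (by omega)))
  have hpre := sum_range_sub_two_lt_one hApos hAmono hm (by rw [← hrecip, ← hfinMin]; exact h2)
  have hlt := prod_range_lt_factorial_mul_sylvesterProd hApos hAmono (by omega) hpre
    (hrecip ▸ h1)
  have hext : extremal m - 1 = sylvesterProd 1 (m - 1) := by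
    rw [← Nat.sub_add_cancel (show 1 ≤ m by omega), extremal_succ]; simp
  simp only [← hA, hext]
  rw [Fin.prod_filter_val_lt (by omega),
    Fin.sum_filter_val_lt (f := fun k => (1 : ℚ) / A k) (by omega)]
  refine ⟨hlt.le, fun hS => ?_⟩
  have hgap := one_div_prod_le_abs_sum_one_div_sub_one (range (m - 1)) A
    (fun i _ => hApos i) hS.ne'
  rw [abs_of_pos (sub_pos.2 hS)] at hgap
  have : 1 / ((m.factorial * sylvesterProd 1 (m - 1) : ℕ) : ℚ) <
      1 / ∏ i ∈ range (m - 1), (A i : ℚ) :=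
    one_div_lt_one_div_of_lt (prod_pos fun i _ => by exact_mod_cast hApos i)
      (by exact_mod_cast hlt)
  linarith

/-- Let `m > 3` and let `a` be a nondecreasing `m`-tuple of positive integers satisfying KE
conditions (1) and (2) and the sphere condition. Then the product of the first `m-1`
entries is at most `m! * (c m - 1)` where `c` is the extremal sequence; consequently if
`∑_{i=1}^{m-1} 1/(a i) > 1` then `∑_{i=1}^{m-1} 1/(a i) > 1 + 1/(m! * (c m - 1))`. -/
theorem prod_first_entries_bound (m : ℕ) (hm : 3 < m) (a : Fin m → ℕ)
    (hmono : Monotone a) (hpos : ∀ i, 0 < a i)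
    (h1 : KE1 a) (h2 : KE2 a) (hs : SphereCond a) :
    (∏ i ∈ Finset.univ.filter (fun i : Fin m => (i : ℕ) < m - 1), a i) ≤
      m.factorial * (extremal m - 1) ∧
    (1 < ∑ i ∈ Finset.univ.filter (fun i : Fin m => (i : ℕ) < m - 1), (1 : ℚ) / (a i : ℚ) →
      1 + 1 / ((m.factorial * (extremal m - 1) : ℕ) : ℚ) <
        ∑ i ∈ Finset.univ.filter (fun i : Fin m => (i : ℕ) < m - 1), (1 : ℚ) / (a i : ℚ)) :=
  prod_first_entries_bound_general m hm a hmono hpos h1 h2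
end
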